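/- arXiv:2111.06682 — 4 statements merged into one kernel-verified Lean document; each statement's English description precedes it below -/
import Mathlib

section
/- Let N ≥ 1, n_D, n_y be natural numbers, let θ : ℝ^{n_D} × ℝ^{n_y} → ℝ^{n_D} be continuous, let d : ℝ^{n_D} × ℝ^{n_y} → ℝ be continuous and coercive (i.e., d(x,r) → ∞ as ‖(x,r)‖ → ∞), and let J ∈ ℝ. Then the set 𝔸 = {(a, x₀) ∈ (Fin N → ℝ^{n_y}) × ℝ^{n_D} : letting x(0) = x₀ and x(k+1) = θ(x(k), a(k)) for 0 ≤ k ≤ N−1, one has d(x(k), a(k)) ≤ J for all 0 ≤ k ≤ N−1} is a compact subset of (Fin N → ℝ^{n_y}) × ℝ^{n_D}. -/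
open Filter

/-- The detector state trajectory: `x(0) = x₀` and `x(k+1) = θ(x(k), a(k))` for `k < N`. -/
def detTraj {nD ny N : ℕ} (θ : (Fin nD → ℝ) × (Fin ny → ℝ) → (Fin nD → ℝ))
    (a : Fin N → Fin ny → ℝ) (x₀ : Fin nD → ℝ) : ℕ → Fin nD → ℝ
  | 0 => x₀
  | k + 1 => if h : k < N then θ (detTraj θ a x₀ k, a ⟨k, h⟩) else detTraj θ a x₀ k

lemma detTraj_continuous {nD ny N : ℕ} (θ : (Fin nD → ℝ) × (Fin ny → ℝ) → (Fin nD → ℝ))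
    (hθ : Continuous θ) (k : ℕ) :
    Continuous (fun p : (Fin N → Fin ny → ℝ) × (Fin nD → ℝ) => detTraj θ p.1 p.2 k) := by
  induction k with
  | zero => exact continuous_snd
  | succ k ih =>
    by_cases h : k < N
    · simp only [detTraj, dif_pos h]
      exact hθ.comp (ih.prodMk ((continuous_apply _).comp continuous_fst))
    · simpa only [detTraj, dif_neg h] using ih

/-- The set of stealthy attack trajectories together with initial detector states is compact. -/
theorem stealthy_set_isCompact (N nD ny : ℕ) (hN : 1 ≤ N)
    (θ : (Fin nD → ℝ) × (Fin ny → ℝ) → (Fin nD → ℝ)) (hθ : Continuous θ)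
    (d : (Fin nD → ℝ) × (Fin ny → ℝ) → ℝ) (hd : Continuous d)
    (hcoercive : Tendsto d (Filter.comap (fun z => ‖z‖) atTop) atTop)
    (J : ℝ) :
    IsCompact {p : (Fin N → Fin ny → ℝ) × (Fin nD → ℝ) |
      ∀ k : Fin N, d (detTraj θ p.1 p.2 (k : ℕ), p.1 k) ≤ J} := by
  -- extract a radius from coercivity
  have hev : ∀ᶠ z in Filter.comap (fun z : (Fin nD → ℝ) × (Fin ny → ℝ) => ‖z‖) atTop,
      J < d z := hcoercive.eventually (eventually_gt_atTop J)
  rw [eventually_comap] at hev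
  obtain ⟨R₀, hR₀⟩ := eventually_atTop.1 hev
  have key : ∀ z : (Fin nD → ℝ) × (Fin ny → ℝ), d z ≤ J → ‖z‖ ≤ R₀ := by
    intro z hz
    by_contra h
    exact absurd (hR₀ ‖z‖ (le_of_not_ge h) z rfl) (not_lt.2 hz)
  set S := {p : (Fin N → Fin ny → ℝ) × (Fin nD → ℝ) |
      ∀ k : Fin N, d (detTraj θ p.1 p.2 (k : ℕ), p.1 k) ≤ J}
  have hclosed : IsClosed S := by
    have : S = ⋂ k : Fin N,
        (fun p : (Fin N → Fin ny → ℝ) × (Fin nD → ℝ) =>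
          d (detTraj θ p.1 p.2 (k : ℕ), p.1 k)) ⁻¹' (Set.Iic J) := by
      ext p; simp [S, Set.mem_iInter]
    rw [this]
    exact isClosed_iInter fun k =>
      IsClosed.preimage
        (hd.comp ((detTraj_continuous θ hθ (k : ℕ)).prodMk
          ((continuous_apply _).comp continuous_fst)))
        isClosed_Iic
  have hbdd : Bornology.IsBounded S := by
    refine (Metric.isBounded_closedBall
      (x := (0 : (Fin N → Fin ny → ℝ) × (Fin nD → ℝ))) (r := max R₀ 0)).subset ?_
    intro p hp
    have hR : ∀ k : Fin N, ‖(detTraj θ p.1 p.2 (k : ℕ), p.1 k)‖ ≤ R₀ :=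
      fun k => key _ (hp k)
    rw [Metric.mem_closedBall, dist_zero_right, Prod.norm_def]
    refine max_le ?_ ?_
    · refine (pi_norm_le_iff_of_nonneg (le_max_right _ _)).2 fun k => ?_
      have h1 : ‖p.1 k‖ ≤ ‖(detTraj θ p.1 p.2 (k : ℕ), p.1 k)‖ := by
        rw [Prod.norm_def]; exact le_max_right _ _
      exact le_trans (le_trans h1 (hR k)) (le_max_left _ _)
    · have h0 : ‖p.2‖ ≤ ‖(detTraj θ p.1 p.2 ((⟨0, hN⟩ : Fin N) : ℕ), p.1 ⟨0, hN⟩)‖ := by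
        rw [Prod.norm_def]; exact le_max_left _ _
      exact le_trans (le_trans h0 (hR ⟨0, hN⟩)) (le_max_left _ _)
  exact Metric.isCompact_of_isClosed_isBounded hclosed hbdd
end

section
/- Let N ≥ 1, let θ : ℝ^{n_D} × ℝ^{n_y} → ℝ^{n_D} be continuous with θ(0,0) = 0, let d : ℝ^{n_D} × ℝ^{n_y} → ℝ be continuous and coercive with d(0,0) = 0, and let J ≥ 0. Define 𝔸 = {(a, x₀) : letting x(0) = x₀, x(k+1) = θ(x(k), a(k)), one has d(x(k), a(k)) ≤ J for all 0 ≤ k ≤ N−1}. Then for every continuous function f : (Fin N → ℝ^{n_y}) → ℝ, the maximum of f(a) over all (a, x₀) ∈ 𝔸 exists, i.e., there is (a*, x₀*) ∈ 𝔸 with f(a*) ≥ f(a) for all (a, x₀) ∈ 𝔸. -/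
open Filter

lemma detTraj_zero {nD ny N : ℕ} (θ : (Fin nD → ℝ) × (Fin ny → ℝ) → (Fin nD → ℝ))
    (hθ0 : θ (0, 0) = 0) (k : ℕ) : detTraj (N := N) θ 0 0 k = 0 := by
  induction k with
  | zero => rfl
  | succ k ih =>
    by_cases h : k < N
    · simp only [detTraj, dif_pos h, ih]; simpa using hθ0
    · simpa only [detTraj, dif_neg h] using ih

/-- For every continuous payoff `f`, the maximum of `f(a)` over the set of stealthy attack
trajectories together with initial detector states exists. -/
theorem max_payoff_exists (N nD ny : ℕ) (hN : 1 ≤ N)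
    (θ : (Fin nD → ℝ) × (Fin ny → ℝ) → (Fin nD → ℝ)) (hθ : Continuous θ)
    (hθ0 : θ (0, 0) = 0)
    (d : (Fin nD → ℝ) × (Fin ny → ℝ) → ℝ) (hd : Continuous d)
    (hcoercive : Tendsto d (Filter.comap (fun z => ‖z‖) atTop) atTop)
    (hd0 : d (0, 0) = 0)
    (J : ℝ) (hJ : 0 ≤ J)
    (f : (Fin N → Fin ny → ℝ) → ℝ) (hf : Continuous f) :
    ∃ pstar ∈ {p : (Fin N → Fin ny → ℝ) × (Fin nD → ℝ) |
        ∀ k : Fin N, d (detTraj θ p.1 p.2 (k : ℕ), p.1 k) ≤ J},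
      ∀ p ∈ {p : (Fin N → Fin ny → ℝ) × (Fin nD → ℝ) |
        ∀ k : Fin N, d (detTraj θ p.1 p.2 (k : ℕ), p.1 k) ≤ J},
        f p.1 ≤ f pstar.1 := by
  set A := {p : (Fin N → Fin ny → ℝ) × (Fin nD → ℝ) |
      ∀ k : Fin N, d (detTraj θ p.1 p.2 (k : ℕ), p.1 k) ≤ J} with hA
  -- the zero point is in A
  have hzero : ((0 : Fin N → Fin ny → ℝ), (0 : Fin nD → ℝ)) ∈ A := by
    intro k
    rw [detTraj_zero θ hθ0]
    exact le_of_eq_of_le hd0 hJ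
  -- A is closed
  have hclosed : IsClosed A := by
    have : A = ⋂ k : Fin N, {p : (Fin N → Fin ny → ℝ) × (Fin nD → ℝ) |
        d (detTraj θ p.1 p.2 (k : ℕ), p.1 k) ≤ J} := by
      ext p; simp [hA, Set.mem_iInter]
    rw [this]
    refine isClosed_iInter fun k => isClosed_le ?_ continuous_const
    exact hd.comp ((detTraj_continuous θ hθ (k : ℕ)).prodMk
      ((continuous_apply _).comp continuous_fst))
  -- coercivity: a radius R ≥ 0 beyond which d > J
  obtain ⟨R, hR⟩ := (eventually_atTop.mp
    (eventually_comap.mp (hcoercive.eventually (eventually_ge_atTop (J + 1)))))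
  set R' := max R 0 with hR'
  have hR'0 : 0 ≤ R' := le_max_right _ _
  have hball : ∀ z : (Fin nD → ℝ) × (Fin ny → ℝ), d z ≤ J → ‖z‖ ≤ R' := by
    intro z hz
    by_contra h
    push_neg at h
    have := hR ‖z‖ (le_trans (le_max_left _ _) h.le) z rfl
    linarith
  -- A is bounded
  have hbdd : Bornology.IsBounded A := by
    refine (Metric.isBounded_closedBall (x := (0 : (Fin N → Fin ny → ℝ) × (Fin nD → ℝ)))
      (r := R')).subset ?_
    intro p hp
    rw [Metric.mem_closedBall, dist_zero_right, Prod.norm_def]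
    have h1 : ∀ k : Fin N, ‖p.1 k‖ ≤ R' :=
      fun k => le_trans (norm_snd_le (detTraj θ p.1 p.2 (k : ℕ), p.1 k)) (hball _ (hp k))
    have h2 : ‖p.2‖ ≤ R' :=
      le_trans (norm_fst_le (detTraj θ p.1 p.2 ((⟨0, hN⟩ : Fin N) : ℕ), p.1 ⟨0, hN⟩))
        (hball _ (hp ⟨0, hN⟩))
    exact max_le ((pi_norm_le_iff_of_nonneg hR'0).mpr h1) h2
  have hcompact : IsCompact A := Metric.isCompact_of_isClosed_isBounded hclosed hbdd
  obtain ⟨pstar, hmem, hmax⟩ := hcompact.exists_isMaxOn ⟨_, hzero⟩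
    ((hf.comp continuous_fst).continuousOn)
  exact ⟨pstar, hmem, fun p hp => hmax hp⟩
end

section
/- Fix m ≥ 2 mean times between false alarms 1 ≤ τ_1 < ⋯ < τ_m, c_F > 0, attacker types φ = 1,…,n_φ with priors π_φ ≥ 0 and payoffs satisfying 0 ≤ I_1^φ ≤ I_2^φ ≤ ⋯ ≤ I_m^φ for every φ. Suppose there exist indices l > η such that c_F/τ_η > c_F/τ_l + Σ_{φ=1}^{n_φ} π_φ I_l^φ. Then for every ν ≤ η and every attacker profile (i_1,…,i_{n_φ}) ∈ {1,…,m}^{n_φ}: c_F/τ_l + Σ_{j=1}^{n_φ} 1{i_j ≤ l}·π_j·I_{i_j}^j < c_F/τ_ν + Σ_{j=1}^{n_φ} 1{i_j ≤ ν}·π_j·I_{i_j}^j. That is, the defender action τ_l strictly dominates every defender action τ_ν with ν ≤ η in the induced matrix game. -/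
open BigOperators

/-- Row domination in the induced matrix game: if `c_F/τ_η > c_F/τ_l + Σ_φ π_φ I_l^φ` for some
`l > η`, then the defender action `τ_l` strictly dominates every defender action `τ_ν` with
`ν ≤ η`. -/
theorem row_domination (m nφ : ℕ) (hm : 2 ≤ m)
    (τ : Fin m → ℝ) (hτmono : StrictMono τ) (hτ1 : 1 ≤ τ ⟨0, by omega⟩)
    (cF : ℝ) (hcF : 0 < cF)
    (π : Fin nφ → ℝ) (hπ : ∀ φ, 0 ≤ π φ)
    (I : Fin nφ → Fin m → ℝ) (hI0 : ∀ φ, 0 ≤ I φ ⟨0, by omega⟩)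
    (hImono : ∀ φ, Monotone (I φ))
    (l η : Fin m) (hηl : η < l)
    (hdom : cF / τ η > cF / τ l + ∑ φ, π φ * I φ l) :
    ∀ ν : Fin m, ν ≤ η → ∀ i : Fin nφ → Fin m,
      cF / τ l + (∑ j, if i j ≤ l then π j * I j (i j) else 0) <
      cF / τ ν + (∑ j, if i j ≤ ν then π j * I j (i j) else 0) := by
  intro ν hν i
  have hτpos : ∀ x : Fin m, 0 < τ x := fun x => by
    have : τ ⟨0, by omega⟩ ≤ τ x := hτmono.monotone (by simp [Fin.le_def])
    linarith
  have hIl : ∀ j, 0 ≤ π j * I j l := fun j =>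
    mul_nonneg (hπ j) (le_trans (hI0 j) (hImono j (by simp [Fin.le_def])))
  -- termwise bound
  have hsum : (∑ j, if i j ≤ l then π j * I j (i j) else 0) ≤
      (∑ j, π j * I j l) + (∑ j, if i j ≤ ν then π j * I j (i j) else 0) := by
    rw [← Finset.sum_add_distrib]
    apply Finset.sum_le_sum
    intro j _
    have h2 : (0:ℝ) ≤ if i j ≤ ν then π j * I j (i j) else 0 := by
      split
      · exact mul_nonneg (hπ j) (le_trans (hI0 j) (hImono j (by simp [Fin.le_def])))
      · exact le_refl 0
    by_cases h : i j ≤ l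
    · have : π j * I j (i j) ≤ π j * I j l :=
        mul_le_mul_of_nonneg_left (hImono j h) (hπ j)
      simp only [h, if_true]
      linarith [hIl j]
    · simp only [h, if_false]
      linarith [hIl j]
  have hτν : cF / τ η ≤ cF / τ ν :=
    div_le_div_of_nonneg_left hcF.le (hτpos ν) (hτmono.monotone hν)
  linarith
end

section
/- Fix m ≥ 3 mean times between false alarms 1 ≤ τ_1 < ⋯ < τ_m, c_F > 0, and a single attacker type with payoffs 0 < I_1 < I_2 < ⋯ < I_m. Fix i with 1 < i < m and define q ∈ ℝ^m by q_j = (c_F/I_j)·(1/τ_{j−1} − 1/τ_j) for j ∈ {i+1,…,m}, q_i = 1 − Σ_{l=i+1}^m q_l, and q_j = 0 for j < i. Assume 0 ≤ q_i and q_i < (c_F/I_i)·(1/τ_{i−1} − 1/τ_i). Then q is a probability vector, and for every probability vector p ∈ ℝ^m one has pᵀΩq ≥ c_F/τ_i + q_i·I_i, with equality if and only if p_j = 0 for all j < i. Consequently, every best response of the defender to q has support contained in {i, i+1, …, m}. -/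
open Matrix BigOperators

/-- A (mixed strategy) probability vector: nonnegative entries summing to one. -/
def IsProbVec {m : ℕ} (p : Fin m → ℝ) : Prop := (∀ i, 0 ≤ p i) ∧ ∑ i, p i = 1

/-- The previous index `j - 1` (mapping `0` to `0`). -/
def prevF {m : ℕ} (j : Fin m) : Fin m := ⟨(j : ℕ) - 1, lt_of_le_of_lt (Nat.sub_le _ _) j.isLt⟩

/-- Defender cost matrix for a single attacker type: `Ω_{i,j} = c_F/τ_i + 1{j ≤ i}·I_j`. -/
noncomputable def OmegaS {m : ℕ} (τ : Fin m → ℝ) (cF : ℝ) (I : Fin m → ℝ) :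
    Matrix (Fin m) (Fin m) ℝ :=
  Matrix.of fun i j => cF / τ i + if j ≤ i then I j else 0

/-- Attacker payoff matrix for a single attacker type: `Υ_{i,j} = 1{j ≤ i}·I_j`. -/
noncomputable def UpsilonS {m : ℕ} (I : Fin m → ℝ) : Matrix (Fin m) (Fin m) ℝ :=
  Matrix.of fun i j => if j ≤ i then I j else 0

/-- The closed-form attacker mixed strategy of the paper's Lemma 4 (Equation (16)):
`q_j = (c_F/I_j)(1/τ_{j-1} - 1/τ_j)` for `j > i`, `q_i = 1 - Σ_{l > i} q_l`, `q_j = 0` for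
`j < i`. -/
noncomputable def qstar {m : ℕ} (τ : Fin m → ℝ) (I : Fin m → ℝ) (cF : ℝ) (i : Fin m) :
    Fin m → ℝ := fun j =>
  if j < i then 0
  else if j = i then 1 - ∑ l ∈ Finset.Ioi i, cF / I l * (1 / τ (prevF l) - 1 / τ l)
  else cF / I j * (1 / τ (prevF j) - 1 / τ j)

lemma telescope_Ioc (g : ℕ → ℝ) (a b : ℕ) (hab : a ≤ b) :
    ∑ n ∈ Finset.Ioc a b, (g (n - 1) - g n) = g a - g b := by
  induction b, hab using Nat.le_induction with
  | base => simp
  | succ b hb ih =>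
    rw [Finset.sum_Ioc_succ_top (by omega), ih, Nat.add_sub_cancel]
    ring

/-- Lemma 4: if the attacker plays the closed-form mixed strategy `qstar` centered at `i`
(with `0 ≤ q_i < (c_F/I_i)(1/τ_{i-1} - 1/τ_i)`), then `qstar` is a probability vector, the
defender's average cost is at least `c_F/τ_i + q_i·I_i` with equality exactly when the
defender puts no mass below `i`; consequently every best response of the defender has support
contained in `{i,…,m}`. -/
theorem closed_form_nash_for_attacker (m : ℕ) (hm : 3 ≤ m)
    (τ : Fin m → ℝ) (hτmono : StrictMono τ) (hτ1 : 1 ≤ τ ⟨0, by omega⟩)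
    (cF : ℝ) (hcF : 0 < cF)
    (I : Fin m → ℝ) (hI0 : 0 < I ⟨0, by omega⟩) (hImono : StrictMono I)
    (i : Fin m) (hi0 : 0 < (i : ℕ)) (him : (i : ℕ) < m - 1)
    (hq0 : 0 ≤ qstar τ I cF i i)
    (hqlt : qstar τ I cF i i < cF / I i * (1 / τ (prevF i) - 1 / τ i)) :
    IsProbVec (qstar τ I cF i) ∧
    (∀ p : Fin m → ℝ, IsProbVec p →
      cF / τ i + qstar τ I cF i i * I i ≤ p ⬝ᵥ (OmegaS τ cF I *ᵥ qstar τ I cF i) ∧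
      (p ⬝ᵥ (OmegaS τ cF I *ᵥ qstar τ I cF i) = cF / τ i + qstar τ I cF i i * I i ↔
        ∀ j, j < i → p j = 0)) ∧
    (∀ p : Fin m → ℝ, IsProbVec p →
      (∀ p' : Fin m → ℝ, IsProbVec p' →
        p ⬝ᵥ (OmegaS τ cF I *ᵥ qstar τ I cF i) ≤ p' ⬝ᵥ (OmegaS τ cF I *ᵥ qstar τ I cF i)) →
      ∀ j, j < i → p j = 0) := by

  -- abbreviations
  set q := qstar τ I cF i with hqdef
  have hmpos : 0 < m := by omega
  have τpos : ∀ k : Fin m, 0 < τ k := by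
    intro k
    have h0 : (⟨0, by omega⟩ : Fin m) ≤ k := by simp [Fin.le_def]
    have := hτmono.monotone h0
    linarith
  have Ipos : ∀ k : Fin m, 0 < I k := by
    intro k
    have h0 : (⟨0, by omega⟩ : Fin m) ≤ k := by simp [Fin.le_def]
    have := hImono.monotone h0
    linarith
  have hqlow : ∀ j : Fin m, j < i → q j = 0 := by
    intro j h; simp [hqdef, qstar, h]
  have hqhigh : ∀ j : Fin m, i < j → q j = cF / I j * (1 / τ (prevF j) - 1 / τ j) := by
    intro j h
    rw [hqdef]
    show (if j < i then (0:ℝ) else if j = i then _ else _) = _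
    rw [if_neg (not_lt_of_gt h), if_neg h.ne']
  have hqi : q i = 1 - ∑ l ∈ Finset.Ioi i, cF / I l * (1 / τ (prevF l) - 1 / τ l) := by
    simp [hqdef, qstar]
  have hprevle : ∀ j : Fin m, prevF j ≤ j := by
    intro j; rw [Fin.le_def]; exact Nat.sub_le _ _
  have hqnonneg : ∀ j : Fin m, 0 ≤ q j := by
    intro j
    rcases lt_trichotomy j i with h | h | h
    · rw [hqlow j h]
    · rw [h]; exact hq0
    · rw [hqhigh j h]
      have h1 : 1 / τ j ≤ 1 / τ (prevF j) :=
        one_div_le_one_div_of_le (τpos _) (hτmono.monotone (hprevle j))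
      have h2 : 0 ≤ cF / I j := div_nonneg hcF.le (Ipos j).le
      nlinarith
  have hsum1 : ∑ j, q j = 1 := by
    have hz : ∀ j ∈ Finset.univ, j ∉ Finset.Ici i → q j = 0 := by
      intro j _ hj
      exact hqlow j (by simpa using hj)
    rw [← Finset.sum_subset (Finset.subset_univ (Finset.Ici i)) hz,
        ← Finset.Ioi_insert i, Finset.sum_insert (by simp)]
    rw [hqi, Finset.sum_congr rfl (fun j hj => hqhigh j (Finset.mem_Ioi.mp hj))]
    ring
  -- the value of (Ω q) at each coordinate
  set V : ℝ := cF / τ i + q i * I i with hVdef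
  have keyval : ∀ k : Fin m, (OmegaS τ cF I *ᵥ q) k = if i ≤ k then V else cF / τ k := by
    intro k
    have expand : (OmegaS τ cF I *ᵥ q) k
        = cF / τ k + ∑ j ∈ Finset.univ.filter (· ≤ k), I j * q j := by
      simp only [OmegaS, Matrix.mulVec, dotProduct, Matrix.of_apply]
      have h1 : ∀ j : Fin m, (cF / τ k + if j ≤ k then I j else 0) * q j
          = cF / τ k * q j + (if j ≤ k then I j * q j else 0) := by
        intro j; split <;> ring
      rw [Finset.sum_congr rfl (fun j _ => h1 j), Finset.sum_add_distrib,
        ← Finset.mul_sum, hsum1, mul_one, ← Finset.sum_filter]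
    by_cases hk : i ≤ k
    · rw [if_pos hk, expand]
      have hsub : Finset.Icc i k ⊆ Finset.univ.filter (· ≤ k) := by
        intro j hj
        simp only [Finset.mem_Icc] at hj
        simp [hj.2]
      have hzero : ∀ j ∈ Finset.univ.filter (· ≤ k), j ∉ Finset.Icc i k → I j * q j = 0 := by
        intro j hj hj'
        simp only [Finset.mem_filter, Finset.mem_univ, true_and] at hj
        simp only [Finset.mem_Icc, not_and] at hj'
        have : j < i := lt_of_not_ge (fun h => hj' h hj)
        rw [hqlow j this, mul_zero]
      rw [← Finset.sum_subset hsub hzero, ← Finset.Ioc_insert_left hk,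
        Finset.sum_insert (by simp)]
      -- telescope the upper part
      set g : ℕ → ℝ := fun n => if h : n < m then 1 / τ ⟨n, h⟩ else 0 with hgdef
      have hgj : ∀ j : Fin m, g (j : ℕ) = 1 / τ j := by
        intro j; simp [hgdef, j.isLt]
      have hgp : ∀ j : Fin m, g ((j : ℕ) - 1) = 1 / τ (prevF j) := by
        intro j
        have h1 : (j : ℕ) - 1 < m := lt_of_le_of_lt (Nat.sub_le _ _) j.isLt
        simp only [hgdef, dif_pos h1]
        rfl
      have hterm : ∀ j ∈ Finset.Ioc i k, I j * q j = cF * (g ((j : ℕ) - 1) - g (j : ℕ)) := by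
        intro j hj
        have hij : i < j := (Finset.mem_Ioc.mp hj).1
        rw [hqhigh j hij, hgj, hgp]
        have hIne : I j ≠ 0 := (Ipos j).ne'
        field_simp
      rw [Finset.sum_congr rfl hterm, ← Finset.mul_sum]
      have htrans : ∑ j ∈ Finset.Ioc i k, (g ((j : ℕ) - 1) - g (j : ℕ))
          = ∑ n ∈ Finset.Ioc (i : ℕ) (k : ℕ), (g (n - 1) - g n) := by
        rw [← Fin.map_valEmbedding_Ioc, Finset.sum_map]
        rfl
      rw [htrans, telescope_Ioc g _ _ hk, hgj, hgj, hVdef]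
      ring
    · rw [if_neg hk, expand]
      have : ∑ j ∈ Finset.univ.filter (· ≤ k), I j * q j = 0 := by
        apply Finset.sum_eq_zero
        intro j hj
        simp only [Finset.mem_filter, Finset.mem_univ, true_and] at hj
        have : j < i := lt_of_le_of_lt hj (lt_of_not_ge hk)
        rw [hqlow j this, mul_zero]
      rw [this, add_zero]
  -- strict gap below i
  have hgap : ∀ k : Fin m, k < i → V < cF / τ k := by
    intro k hk
    have hIi : (0 : ℝ) < I i := Ipos i
    have h1 : q i * I i < cF * (1 / τ (prevF i) - 1 / τ i) := by
      have := mul_lt_mul_of_pos_right hqlt hIi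
      have heq : cF / I i * (1 / τ (prevF i) - 1 / τ i) * I i
          = cF * (1 / τ (prevF i) - 1 / τ i) := by
        field_simp
      linarith [this, heq.le]
    have hkle : k ≤ prevF i := by
      simp only [prevF, Fin.le_def, Fin.lt_def] at hk ⊢
      omega
    have h2 : 1 / τ (prevF i) ≤ 1 / τ k :=
      one_div_le_one_div_of_le (τpos _) (hτmono.monotone hkle)
    have h3 : cF * (1 / τ (prevF i) - 1 / τ i) ≤ cF * (1 / τ k - 1 / τ i) := by
      nlinarith
    have h4 : cF / τ i + cF * (1 / τ k - 1 / τ i) = cF / τ k := by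
      have hτk : τ k ≠ 0 := (τpos k).ne'
      have hτi : τ i ≠ 0 := (τpos i).ne'
      field_simp
      ring
    rw [hVdef]
    linarith
  have hprob : IsProbVec q := ⟨hqnonneg, hsum1⟩
  -- the main inequality/equality for arbitrary p
  have main : ∀ p : Fin m → ℝ, IsProbVec p →
      V ≤ p ⬝ᵥ (OmegaS τ cF I *ᵥ q) ∧
      (p ⬝ᵥ (OmegaS τ cF I *ᵥ q) = V ↔ ∀ j, j < i → p j = 0) := by
    intro p hp
    have expand : p ⬝ᵥ (OmegaS τ cF I *ᵥ q)
        = V + ∑ k, p k * ((OmegaS τ cF I *ᵥ q) k - V) := by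
      simp only [dotProduct, mul_sub, Finset.sum_sub_distrib, ← Finset.sum_mul, hp.2]
      ring
    have term_nonneg : ∀ k : Fin m, 0 ≤ p k * ((OmegaS τ cF I *ᵥ q) k - V) := by
      intro k
      rcases le_or_gt i k with h | h
      · rw [keyval k, if_pos h]; simp
      · rw [keyval k, if_neg h.not_ge]
        exact mul_nonneg (hp.1 k) (sub_nonneg.2 (hgap k h).le)
    constructor
    · rw [expand]
      have : (0:ℝ) ≤ ∑ k, p k * ((OmegaS τ cF I *ᵥ q) k - V) := Finset.sum_nonneg (fun k _ => term_nonneg k)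
      linarith
    · rw [expand]
      constructor
      · intro h
        have hs : ∑ k, p k * ((OmegaS τ cF I *ᵥ q) k - V) = 0 := by linarith
        have hall := (Finset.sum_eq_zero_iff_of_nonneg (fun k _ => term_nonneg k)).mp hs
        intro j hj
        have := hall j (Finset.mem_univ j)
        rcases mul_eq_zero.mp this with h0 | h0
        · exact h0
        · exfalso
          have : (OmegaS τ cF I *ᵥ q) j = cF / τ j := by rw [keyval j, if_neg hj.not_ge]
          rw [this] at h0
          have := hgap j hj
          linarith
      · intro h
        have hs : ∑ k, p k * ((OmegaS τ cF I *ᵥ q) k - V) = 0 := by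
          apply Finset.sum_eq_zero
          intro k _
          rcases le_or_gt i k with hik | hik
          · rw [keyval k, if_pos hik]; ring
          · rw [h k hik]; ring
        rw [hs]; ring
  refine ⟨hprob, fun p hp => ⟨(main p hp).1, (main p hp).2⟩, ?_⟩
  · intro p hp hbr j hj
    set δ : Fin m → ℝ := fun j => if j = i then 1 else 0 with hδdef
    have hδprob : IsProbVec δ := by
      constructor
      · intro j; simp only [hδdef]; split <;> norm_num
      · simp [hδdef]
    have hδval : δ ⬝ᵥ (OmegaS τ cF I *ᵥ q) = V := by
      simp only [dotProduct, hδdef, ite_mul, one_mul, zero_mul]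
      rw [Finset.sum_ite_eq' Finset.univ i, if_pos (Finset.mem_univ i), keyval i, if_pos le_rfl]
    have hle := hbr δ hδprob
    rw [hδval] at hle
    have hge := (main p hp).1
    exact (main p hp).2.mp (le_antisymm hle hge) j hj
end
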